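/- Fix γ_l, γ_r > 2 and let B(a,b) = Γ(a)Γ(b)/Γ(a+b) denote the Beta function. Let K be a compact subset of the open region {(π_l, π_r, k_l, k_r) ∈ ℝ⁴ : 0 < π_l, 0 < π_r, π_l + π_r < 1, 0 < k_l < 1, 0 < k_r < 1}, and for p ∈ K let b_p be the associated reciprocal assessor on (0,1). For p ∈ K and m ∈ (0,1), let J_p(m) denote the unique open sublevel interval of b_p with Lebesgue measure m. Then for every s̲ ∈ (0,1) and every ε ∈ (0, s̲) there exists δ > 0 such that for all p, p* ∈ K with coordinate-wise distance ‖p − p*‖_∞ < δ and all s ∈ [s̲, 1): J_p(1 − s) ⊆ J_{p*}(1 − s + ε), and if additionally s + ε < 1 then J_{p*}(1 − s − ε) ⊆ J_p(1 − s). -/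

import Mathlib

open Set Filter MeasureTheory

/-- The Beta function `B(a,b) = Γ(a)Γ(b)/Γ(a+b)`. -/
noncomputable def betaFn (a b : ℝ) : ℝ := Real.Gamma a * Real.Gamma b / Real.Gamma (a + b)

/-- The open parameter region `{(π_l, π_r, k_l, k_r) : 0 < π_l, 0 < π_r, π_l + π_r < 1,
0 < k_l < 1, 0 < k_r < 1}`. -/
def paramRegion : Set (ℝ × ℝ × ℝ × ℝ) :=
  {p | 0 < p.1 ∧ 0 < p.2.1 ∧ p.1 + p.2.1 < 1 ∧
    0 < p.2.2.1 ∧ p.2.2.1 < 1 ∧ 0 < p.2.2.2 ∧ p.2.2.2 < 1}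

/-- The reciprocal assessor `b_p(u)` of the working beta-mixture model with parameters
`p = (π_l, π_r, k_l, k_r)` and fixed shape parameters `γ_l, γ_r`. -/
noncomputable def bAssessor (γl γr : ℝ) (p : ℝ × ℝ × ℝ × ℝ) (u : ℝ) : ℝ :=
  1 + (p.1 * (betaFn p.2.2.1 γl)⁻¹ * u ^ (p.2.2.1 - 1) * (1 - u) ^ (γl - 1)
    + p.2.1 * (betaFn γr p.2.2.2)⁻¹ * u ^ (γr - 1) * (1 - u) ^ (p.2.2.2 - 1))
    / (1 - p.1 - p.2.1)

section AuxLemmas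

open Real Topology

lemma betaFn_pos {a b : ℝ} (ha : 0 < a) (hb : 0 < b) : 0 < betaFn a b :=
  div_pos (mul_pos (Real.Gamma_pos_of_pos ha) (Real.Gamma_pos_of_pos hb))
    (Real.Gamma_pos_of_pos (by linarith))

lemma continuousAt_Gamma_pos {x : ℝ} (hx : 0 < x) : ContinuousAt Real.Gamma x := by
  refine (Real.differentiableAt_Gamma fun m => ?_).continuousAt
  have : -(m : ℝ) ≤ 0 := neg_nonpos.mpr (Nat.cast_nonneg m)
  exact ne_of_gt (lt_of_le_of_lt this hx)

/-- Joint continuity of the assessor at interior points. -/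
lemma bA_contAt (γl γr : ℝ) (hγl : 0 < γl) (hγr : 0 < γr)
    {p : ℝ × ℝ × ℝ × ℝ} {u : ℝ} (hp : p ∈ paramRegion) (hu0 : 0 < u) (hu1 : u < 1) :
    ContinuousAt (fun q : (ℝ × ℝ × ℝ × ℝ) × ℝ => bAssessor γl γr q.1 q.2) (p, u) := by
  obtain ⟨h1, h2, h3, h4, h5, h6, h7⟩ := hp
  have c1 : ContinuousAt (fun q : (ℝ × ℝ × ℝ × ℝ) × ℝ => q.1.1) (p, u) :=
    (continuous_fst.fst).continuousAt
  have c2 : ContinuousAt (fun q : (ℝ × ℝ × ℝ × ℝ) × ℝ => q.1.2.1) (p, u) :=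
    (continuous_fst.snd.fst).continuousAt
  have c3 : ContinuousAt (fun q : (ℝ × ℝ × ℝ × ℝ) × ℝ => q.1.2.2.1) (p, u) :=
    (continuous_fst.snd.snd.fst).continuousAt
  have c4 : ContinuousAt (fun q : (ℝ × ℝ × ℝ × ℝ) × ℝ => q.1.2.2.2) (p, u) :=
    (continuous_fst.snd.snd.snd).continuousAt
  have cu : ContinuousAt (fun q : (ℝ × ℝ × ℝ × ℝ) × ℝ => q.2) (p, u) :=
    continuous_snd.continuousAt
  have cB1 : ContinuousAt (fun q : (ℝ × ℝ × ℝ × ℝ) × ℝ => (betaFn q.1.2.2.1 γl)⁻¹) (p, u) := by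
    refine ContinuousAt.inv₀ ?_ (betaFn_pos h4 hγl).ne'
    unfold betaFn
    refine ContinuousAt.div ?_ ?_ (Real.Gamma_pos_of_pos (by linarith : (0:ℝ) < p.2.2.1 + γl)).ne'
    · have hg := ContinuousAt.comp (g := Real.Gamma)
        (f := fun q : (ℝ × ℝ × ℝ × ℝ) × ℝ => q.1.2.2.1) (x := (p, u))
        (continuousAt_Gamma_pos h4) c3
      exact hg.mul continuousAt_const
    · have hg := ContinuousAt.comp (g := Real.Gamma)
        (f := fun q : (ℝ × ℝ × ℝ × ℝ) × ℝ => q.1.2.2.1 + γl) (x := (p, u))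
        (continuousAt_Gamma_pos (show (0:ℝ) < p.2.2.1 + γl by linarith))
        (c3.add continuousAt_const)
      exact hg
  have cB2 : ContinuousAt (fun q : (ℝ × ℝ × ℝ × ℝ) × ℝ => (betaFn γr q.1.2.2.2)⁻¹) (p, u) := by
    refine ContinuousAt.inv₀ ?_ (betaFn_pos hγr h6).ne'
    unfold betaFn
    refine ContinuousAt.div ?_ ?_ (Real.Gamma_pos_of_pos (by linarith : (0:ℝ) < γr + p.2.2.2)).ne'
    · have hg := ContinuousAt.comp (g := Real.Gamma)
        (f := fun q : (ℝ × ℝ × ℝ × ℝ) × ℝ => q.1.2.2.2) (x := (p, u))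
        (continuousAt_Gamma_pos h6) c4
      exact continuousAt_const.mul hg
    · have hg := ContinuousAt.comp (g := Real.Gamma)
        (f := fun q : (ℝ × ℝ × ℝ × ℝ) × ℝ => γr + q.1.2.2.2) (x := (p, u))
        (continuousAt_Gamma_pos (show (0:ℝ) < γr + p.2.2.2 by linarith))
        (continuousAt_const.add c4)
      exact hg
  have r1 : ContinuousAt (fun q : (ℝ × ℝ × ℝ × ℝ) × ℝ => q.2 ^ (q.1.2.2.1 - 1)) (p, u) :=
    ContinuousAt.rpow cu (c3.sub continuousAt_const) (Or.inl hu0.ne')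
  have r2 : ContinuousAt (fun q : (ℝ × ℝ × ℝ × ℝ) × ℝ => (1 - q.2) ^ (γl - 1)) (p, u) :=
    ContinuousAt.rpow (continuousAt_const.sub cu) continuousAt_const
      (Or.inl (by linarith : (1:ℝ) - u ≠ 0))
  have r3 : ContinuousAt (fun q : (ℝ × ℝ × ℝ × ℝ) × ℝ => q.2 ^ (γr - 1)) (p, u) :=
    ContinuousAt.rpow cu continuousAt_const (Or.inl hu0.ne')
  have r4 : ContinuousAt (fun q : (ℝ × ℝ × ℝ × ℝ) × ℝ => (1 - q.2) ^ (q.1.2.2.2 - 1)) (p, u) :=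
    ContinuousAt.rpow (continuousAt_const.sub cu) (c4.sub continuousAt_const)
      (Or.inl (by linarith : (1:ℝ) - u ≠ 0))
  have hden : (1 : ℝ) - p.1 - p.2.1 ≠ 0 := by linarith
  simp only [bAssessor]
  exact continuousAt_const.add
    (ContinuousAt.div ((((c1.mul cB1).mul r1).mul r2).add (((c2.mul cB2).mul r3).mul r4))
      ((continuousAt_const.sub c1).sub c2) hden)

lemma bA_contOn_u (γl γr : ℝ) (hγl : 0 < γl) (hγr : 0 < γr)
    {p : ℝ × ℝ × ℝ × ℝ} (hp : p ∈ paramRegion) :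
    ContinuousOn (fun u => bAssessor γl γr p u) (Set.Ioo (0:ℝ) 1) := by
  intro u hu
  have hf : ContinuousAt (fun v : ℝ => ((p, v) : (ℝ × ℝ × ℝ × ℝ) × ℝ)) u :=
    (continuous_const.prodMk continuous_id).continuousAt
  exact (ContinuousAt.comp (f := fun v : ℝ => ((p, v) : (ℝ × ℝ × ℝ × ℝ) × ℝ)) (x := u)
    (bA_contAt γl γr hγl hγr hp hu.1 hu.2) hf).continuousWithinAt

lemma bA_contAt_param (γl γr : ℝ) (hγl : 0 < γl) (hγr : 0 < γr)
    {p : ℝ × ℝ × ℝ × ℝ} (hp : p ∈ paramRegion) {u : ℝ} (hu0 : 0 < u) (hu1 : u < 1) :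
    ContinuousAt (fun p' : ℝ × ℝ × ℝ × ℝ => bAssessor γl γr p' u) p :=
  by
  have hf : ContinuousAt (fun p' : ℝ × ℝ × ℝ × ℝ => ((p', u) : (ℝ × ℝ × ℝ × ℝ) × ℝ)) p :=
    (continuous_id.prodMk continuous_const).continuousAt
  exact ContinuousAt.comp (f := fun p' : ℝ × ℝ × ℝ × ℝ => ((p', u) : (ℝ × ℝ × ℝ × ℝ) × ℝ))
    (x := p) (bA_contAt γl γr hγl hγr hp hu0 hu1) hf

lemma measurableSet_sublevel (γl γr : ℝ) (hγl : 0 < γl) (hγr : 0 < γr)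
    {p : ℝ × ℝ × ℝ × ℝ} (hp : p ∈ paramRegion) (y : ℝ) :
    MeasurableSet {u : ℝ | u ∈ Set.Ioo (0:ℝ) 1 ∧ bAssessor γl γr p u < y} := by
  have : IsOpen (Set.Ioo (0:ℝ) 1 ∩ (fun u => bAssessor γl γr p u) ⁻¹' Set.Iio y) :=
    (bA_contOn_u γl γr hγl hγr hp).isOpen_inter_preimage isOpen_Ioo isOpen_Iio
  exact this.measurableSet

/-- Real powers are real-analytic on the positive axis. -/
lemma analyticAt_rpow_const {x e : ℝ} (hx : 0 < x) : AnalyticAt ℝ (fun u : ℝ => u ^ e) x := by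
  have h1 : AnalyticAt ℂ (fun w : ℂ => w ^ (e : ℂ)) (x : ℂ) := by
    refine AnalyticAt.cpow analyticAt_id analyticAt_const ?_
    rw [Complex.mem_slitPlane_iff]
    exact Or.inl (by simpa using hx)
  have h2 : AnalyticAt ℝ (fun w : ℂ => w ^ (e : ℂ)) (x : ℂ) := h1.restrictScalars
  have h3 : AnalyticAt ℝ (fun u : ℝ => ((u : ℂ) ^ (e : ℂ))) x :=
    h2.comp (Complex.ofRealCLM.analyticAt x)
  have h4 : AnalyticAt ℝ (fun u : ℝ => ((u : ℂ) ^ (e : ℂ)).re) x :=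
    (Complex.reCLM.analyticAt _).comp h3
  refine h4.congr ?_
  have hev : ∀ᶠ u in 𝓝 x, 0 < u := eventually_gt_nhds hx
  filter_upwards [hev] with u hu
  rw [← Complex.ofReal_cpow hu.le, Complex.ofReal_re]

lemma analyticOnNhd_bA (γl γr : ℝ) (p : ℝ × ℝ × ℝ × ℝ) :
    AnalyticOnNhd ℝ (fun u => bAssessor γl γr p u) (Set.Ioo (0:ℝ) 1) := by
  intro z hz
  have hz0 : 0 < z := hz.1
  have hz1 : 0 < 1 - z := by linarith [hz.2]
  have a1 : AnalyticAt ℝ (fun u : ℝ => u ^ (p.2.2.1 - 1)) z := analyticAt_rpow_const hz0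
  have a3 : AnalyticAt ℝ (fun u : ℝ => u ^ (γr - 1)) z := analyticAt_rpow_const hz0
  have aff : AnalyticAt ℝ (fun u : ℝ => 1 - u) z := analyticAt_const.sub analyticAt_id
  have a2 : AnalyticAt ℝ (fun u : ℝ => (1 - u) ^ (γl - 1)) z :=
    (analyticAt_rpow_const (e := γl - 1) hz1).comp aff
  have a4 : AnalyticAt ℝ (fun u : ℝ => (1 - u) ^ (p.2.2.2 - 1)) z :=
    (analyticAt_rpow_const (e := p.2.2.2 - 1) hz1).comp aff
  simp only [bAssessor, div_eq_mul_inv]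
  exact analyticAt_const.add
    (((((analyticAt_const.mul a1).mul a2)).add ((analyticAt_const.mul a3).mul a4)).mul
      analyticAt_const)

/-- If the assessor blows up near the endpoints, each level set below the blow-up
threshold is Lebesgue-null. -/
lemma level_set_null (γl γr : ℝ) (p : ℝ × ℝ × ℝ × ℝ) {y β M : ℝ}
    (hβ0 : 0 < β) (hβ1 : β < 1 - β)
    (hblow : ∀ u ∈ Set.Ioo (0:ℝ) 1, u ∉ Set.Icc β (1 - β) → M ≤ bAssessor γl γr p u)
    (hy : y < M) :
    MeasureTheory.volume {u : ℝ | u ∈ Set.Ioo (0:ℝ) 1 ∧ bAssessor γl γr p u = y} = 0 := by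
  set f : ℝ → ℝ := fun u => bAssessor γl γr p u - y with hf
  have hfa : AnalyticOnNhd ℝ f (Set.Ioo (0:ℝ) 1) :=
    fun z hz => ((analyticOnNhd_bA γl γr p) z hz).sub analyticAt_const
  have hIccIoo : Set.Icc β (1 - β) ⊆ Set.Ioo (0:ℝ) 1 := fun u hu =>
    ⟨lt_of_lt_of_le hβ0 hu.1, lt_of_le_of_lt hu.2 (by linarith)⟩
  set Z : Set ℝ := Set.Icc β (1 - β) ∩ f ⁻¹' {0} with hZ
  have hsub : {u : ℝ | u ∈ Set.Ioo (0:ℝ) 1 ∧ bAssessor γl γr p u = y} ⊆ Z := by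
    rintro u ⟨hu, hby⟩
    by_cases hmem : u ∈ Set.Icc β (1 - β)
    · exact ⟨hmem, by simp [hf, hby]⟩
    · exact absurd (hblow u hu hmem) (by rw [hby]; exact not_le.mpr hy)
  have hZclosed : IsClosed Z :=
    ((hfa.continuousOn).mono hIccIoo).preimage_isClosed_of_isClosed isClosed_Icc
      isClosed_singleton
  have hZcomp : IsCompact Z :=
    isCompact_Icc.of_isClosed_subset hZclosed Set.inter_subset_left
  have hβhalf : β / 2 ∈ Set.Ioo (0:ℝ) 1 := ⟨by linarith, by linarith⟩
  have hβnot : β / 2 ∉ Set.Icc β (1 - β) := fun hc => by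
    have := hc.1; linarith
  have hdisc : DiscreteTopology Z := by
    rw [discreteTopology_subtype_iff]
    intro z hz
    have hzIoo : z ∈ Set.Ioo (0:ℝ) 1 := hIccIoo hz.1
    rcases (hfa z hzIoo).eventually_eq_zero_or_eventually_ne_zero with hev | hev
    · exfalso
      have heq := hfa.eqOn_zero_of_preconnected_of_eventuallyEq_zero
        (isPreconnected_Ioo) hzIoo hev
      have h0 : f (β / 2) = 0 := heq hβhalf
      have hM := hblow (β / 2) hβhalf hβnot
      have : bAssessor γl γr p (β / 2) = y := by
        have := h0; simp only [hf] at this; linarith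
      rw [this] at hM; linarith
    · rw [← Filter.empty_mem_iff_bot]
      have h1 : {u : ℝ | f u ≠ 0} ∈ 𝓝[≠] z := hev
      have h2 : Z ∈ 𝓟 Z := Filter.mem_principal_self Z
      have h3 : {u : ℝ | f u ≠ 0} ∩ Z ∈ 𝓝[≠] z ⊓ 𝓟 Z := Filter.inter_mem_inf h1 h2
      have h4 : {u : ℝ | f u ≠ 0} ∩ Z = ∅ := by
        ext u; simp only [Set.mem_inter_iff, Set.mem_empty_iff_false, iff_false]
        rintro ⟨hne, _, hzero⟩
        exact hne hzero
      rwa [h4] at h3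
  have hfin : Z.Finite := hZcomp.finite (isDiscrete_iff_discreteTopology.mpr hdisc)
  exact measure_mono_null hsub (hfin.measure_zero _)

lemma prod4_le {a b c d a' b' c' d' : ℝ} (ha : 0 ≤ a) (hb : 0 ≤ b) (hc : 0 ≤ c) (hd : 0 ≤ d)
    (ha' : a ≤ a') (hb' : b ≤ b') (hc' : c ≤ c') (hd' : d ≤ d') :
    a * b * c * d ≤ a' * b' * c' * d' := by
  have h1 : a * b ≤ a' * b' := mul_le_mul ha' hb' hb (ha.trans ha')
  have h2 : a * b * c ≤ a' * b' * c' :=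
    mul_le_mul h1 hc' hc (mul_nonneg (ha.trans ha') (hb.trans hb'))
  exact mul_le_mul h2 hd' hd
    (mul_nonneg (mul_nonneg (ha.trans ha') (hb.trans hb')) (hc.trans hc'))

end AuxLemmas

set_option maxHeartbeats 2000000

/-- Lemma D.3 (second event inclusion lemma), displays (lowerBdd) and (upperBdd), restated
on the u-scale.  Here `J p m` denotes the unique open sublevel interval of `b_p` with
Lebesgue measure `m` (hypothesized through its characterizing property).  Under a small
perturbation of the parameters, for all `s ∈ [s̲, 1)`:
`J p (1-s) ⊆ J p* (1-s+ε)`, and `J p* (1-s-ε) ⊆ J p (1-s)` whenever `s + ε < 1`. -/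
theorem second_event_inclusion (γl γr : ℝ) (hγl : 2 < γl) (hγr : 2 < γr)
    (K : Set (ℝ × ℝ × ℝ × ℝ)) (hK : IsCompact K) (hKsub : K ⊆ paramRegion)
    (J : (ℝ × ℝ × ℝ × ℝ) → ℝ → Set ℝ)
    (hJ : ∀ p ∈ K, ∀ m ∈ Set.Ioo (0 : ℝ) 1,
      (∃ y : ℝ, J p m = {u : ℝ | u ∈ Set.Ioo (0 : ℝ) 1 ∧ bAssessor γl γr p u < y}) ∧
      MeasureTheory.volume (J p m) = ENNReal.ofReal m) :
    ∀ slo ∈ Set.Ioo (0 : ℝ) 1, ∀ ε ∈ Set.Ioo (0 : ℝ) slo,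
      ∃ δ > (0 : ℝ), ∀ p ∈ K, ∀ pstar ∈ K, ‖p - pstar‖ < δ →
        ∀ s ∈ Set.Ico slo 1,
          J p (1 - s) ⊆ J pstar (1 - s + ε) ∧
          (s + ε < 1 → J pstar (1 - s - ε) ⊆ J p (1 - s)) := by
  intro slo hslo ε hε
  obtain ⟨hslo0, hslo1⟩ := hslo
  obtain ⟨hε0, hεslo⟩ := hε
  have hγl0 : (0:ℝ) < γl := by linarith
  have hγr0 : (0:ℝ) < γr := by linarith
  rcases K.eq_empty_or_nonempty with hKe | hKne
  · refine ⟨1, one_pos, ?_⟩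
    intro p hp
    rw [hKe] at hp
    exact absurd hp (Set.notMem_empty p)
  -- ####### compactness constants #######
  obtain ⟨pτ, hpτK, hpτmin⟩ := hK.exists_isMinOn hKne
    (Continuous.continuousOn (f := fun p : ℝ × ℝ × ℝ × ℝ => 1 - p.1 - p.2.1) (by fun_prop))
  set τ : ℝ := 1 - pτ.1 - pτ.2.1 with hτdef
  have hτ0 : 0 < τ := by
    obtain ⟨h1, h2, h3, _⟩ := hKsub hpτK
    simp only [hτdef]; linarith
  have hτle : ∀ p ∈ K, τ ≤ 1 - p.1 - p.2.1 := fun p hp => isMinOn_iff.mp hpτmin p hp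
  obtain ⟨pπ, hpπK, hpπmin⟩ := hK.exists_isMinOn hKne
    (Continuous.continuousOn (f := fun p : ℝ × ℝ × ℝ × ℝ => min p.1 p.2.1)
      (continuous_fst.min (continuous_snd.fst)))
  set πm : ℝ := min pπ.1 pπ.2.1 with hπdef
  have hπm0 : 0 < πm := by
    obtain ⟨h1, h2, _⟩ := hKsub hpπK
    exact lt_min h1 h2
  have hπle : ∀ p ∈ K, πm ≤ p.1 ∧ πm ≤ p.2.1 := by
    intro p hp
    have h := isMinOn_iff.mp hpπmin p hp
    exact ⟨h.trans (min_le_left _ _), h.trans (min_le_right _ _)⟩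
  obtain ⟨pa, hpaK, hpamin⟩ := hK.exists_isMinOn hKne
    (Continuous.continuousOn (f := fun p : ℝ × ℝ × ℝ × ℝ => min p.2.2.1 p.2.2.2)
      ((continuous_snd.snd.fst).min (continuous_snd.snd.snd)))
  set ka : ℝ := min pa.2.2.1 pa.2.2.2 with hkadef
  have hka0 : 0 < ka := by
    obtain ⟨_, _, _, h4, _, h6, _⟩ := hKsub hpaK
    exact lt_min h4 h6
  have hkale : ∀ p ∈ K, ka ≤ p.2.2.1 ∧ ka ≤ p.2.2.2 := by
    intro p hp
    have h := isMinOn_iff.mp hpamin p hp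
    exact ⟨h.trans (min_le_left _ _), h.trans (min_le_right _ _)⟩
  obtain ⟨pb, hpbK, hpbmax⟩ := hK.exists_isMaxOn hKne
    (Continuous.continuousOn (f := fun p : ℝ × ℝ × ℝ × ℝ => max p.2.2.1 p.2.2.2)
      ((continuous_snd.snd.fst).max (continuous_snd.snd.snd)))
  set kb : ℝ := max pb.2.2.1 pb.2.2.2 with hkbdef
  have hkb1 : kb < 1 := by
    obtain ⟨_, _, _, _, h5, _, h7⟩ := hKsub hpbK
    exact max_lt h5 h7
  have hkble : ∀ p ∈ K, p.2.2.1 ≤ kb ∧ p.2.2.2 ≤ kb := by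
    intro p hp
    have h := isMaxOn_iff.mp hpbmax p hp
    exact ⟨(le_max_left _ _).trans h, (le_max_right _ _).trans h⟩
  -- beta function bounds
  have hcontB1 : ContinuousOn (fun p : ℝ × ℝ × ℝ × ℝ => betaFn p.2.2.1 γl) K := by
    intro p hp
    obtain ⟨_, _, _, h4, _, h6, _⟩ := hKsub hp
    have hg1 := ContinuousAt.comp (g := Real.Gamma)
      (f := fun p : ℝ × ℝ × ℝ × ℝ => p.2.2.1) (x := p)
      (continuousAt_Gamma_pos h4) ((continuous_snd.snd.fst).continuousAt)
    have hg2 := ContinuousAt.comp (g := Real.Gamma)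
      (f := fun p : ℝ × ℝ × ℝ × ℝ => p.2.2.1 + γl) (x := p)
      (continuousAt_Gamma_pos (show (0:ℝ) < p.2.2.1 + γl by linarith))
      ((continuous_snd.snd.fst).continuousAt.add continuousAt_const)
    have hB1 : ContinuousAt (fun p : ℝ × ℝ × ℝ × ℝ => betaFn p.2.2.1 γl) p := by
      simp only [betaFn]
      exact (hg1.mul continuousAt_const).div hg2
        (Real.Gamma_pos_of_pos (by linarith : (0:ℝ) < p.2.2.1 + γl)).ne'
    exact hB1.continuousWithinAt
  have hcontB2 : ContinuousOn (fun p : ℝ × ℝ × ℝ × ℝ => betaFn γr p.2.2.2) K := by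
    intro p hp
    obtain ⟨_, _, _, h4, _, h6, _⟩ := hKsub hp
    have hg3 := ContinuousAt.comp (g := Real.Gamma)
      (f := fun p : ℝ × ℝ × ℝ × ℝ => p.2.2.2) (x := p)
      (continuousAt_Gamma_pos h6) ((continuous_snd.snd.snd).continuousAt)
    have hg4 := ContinuousAt.comp (g := Real.Gamma)
      (f := fun p : ℝ × ℝ × ℝ × ℝ => γr + p.2.2.2) (x := p)
      (continuousAt_Gamma_pos (show (0:ℝ) < γr + p.2.2.2 by linarith))
      (continuousAt_const.add (continuous_snd.snd.snd).continuousAt)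
    have hB2 : ContinuousAt (fun p : ℝ × ℝ × ℝ × ℝ => betaFn γr p.2.2.2) p := by
      simp only [betaFn]
      exact (continuousAt_const.mul hg3).div hg4
        (Real.Gamma_pos_of_pos (by linarith : (0:ℝ) < γr + p.2.2.2)).ne'
    exact hB2.continuousWithinAt
  obtain ⟨pB, hpBK, hpBmin⟩ := hK.exists_isMinOn hKne
    (hcontB1.inf hcontB2)
  set Bmin : ℝ := min (betaFn pB.2.2.1 γl) (betaFn γr pB.2.2.2) with hBmindef
  have hBmin0 : 0 < Bmin := by
    obtain ⟨_, _, _, h4, _, h6, _⟩ := hKsub hpBK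
    exact lt_min (betaFn_pos h4 hγl0) (betaFn_pos hγr0 h6)
  have hBminle : ∀ p ∈ K, Bmin ≤ betaFn p.2.2.1 γl ∧ Bmin ≤ betaFn γr p.2.2.2 := by
    intro p hp
    have h := isMinOn_iff.mp hpBmin p hp
    exact ⟨h.trans (min_le_left _ _), h.trans (min_le_right _ _)⟩
  obtain ⟨pC, hpCK, hpCmax⟩ := hK.exists_isMaxOn hKne
    (hcontB1.sup hcontB2)
  set Bmax : ℝ := max (betaFn pC.2.2.1 γl) (betaFn γr pC.2.2.2) with hBmaxdef
  have hBmax0 : 0 < Bmax := by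
    obtain ⟨_, _, _, h4, _⟩ := hKsub hpCK
    exact lt_of_lt_of_le (betaFn_pos h4 hγl0) (le_max_left _ _)
  have hBmaxle : ∀ p ∈ K, betaFn p.2.2.1 γl ≤ Bmax ∧ betaFn γr p.2.2.2 ≤ Bmax := by
    intro p hp
    have h := isMaxOn_iff.mp hpCmax p hp
    exact ⟨(le_max_left _ _).trans h, (le_max_right _ _).trans h⟩
  -- ####### basic pointwise bounds #######
  have hBfacts : ∀ p ∈ K, 0 < betaFn p.2.2.1 γl ∧ 0 < betaFn γr p.2.2.2 := fun p hp =>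
    ⟨betaFn_pos (hKsub hp).2.2.2.1 hγl0, betaFn_pos hγr0 (hKsub hp).2.2.2.2.2.1⟩
  have hterm : ∀ p ∈ K, ∀ u ∈ Set.Ioo (0:ℝ) 1,
      0 ≤ p.1 * (betaFn p.2.2.1 γl)⁻¹ * u ^ (p.2.2.1 - 1) * (1-u) ^ (γl - 1) ∧
      0 ≤ p.2.1 * (betaFn γr p.2.2.2)⁻¹ * u ^ (γr - 1) * (1-u) ^ (p.2.2.2 - 1) := by
    intro p hp u hu
    obtain ⟨r1, r2, _⟩ := hKsub hp
    obtain ⟨hB1, hB2⟩ := hBfacts p hp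
    constructor
    · exact mul_nonneg (mul_nonneg (mul_nonneg r1.le (inv_nonneg.mpr hB1.le))
        (Real.rpow_nonneg hu.1.le _)) (Real.rpow_nonneg (by linarith [hu.2]) _)
    · exact mul_nonneg (mul_nonneg (mul_nonneg r2.le (inv_nonneg.mpr hB2.le))
        (Real.rpow_nonneg hu.1.le _)) (Real.rpow_nonneg (by linarith [hu.2]) _)
  have hb_lower : ∀ p ∈ K, ∀ u ∈ Set.Ioo (0:ℝ) 1,
      1 + p.1 * (betaFn p.2.2.1 γl)⁻¹ * u ^ (p.2.2.1 - 1) * (1-u) ^ (γl - 1)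
        ≤ bAssessor γl γr p u ∧
      1 + p.2.1 * (betaFn γr p.2.2.2)⁻¹ * u ^ (γr - 1) * (1-u) ^ (p.2.2.2 - 1)
        ≤ bAssessor γl γr p u := by
    intro p hp u hu
    obtain ⟨ht1, ht2⟩ := hterm p hp u hu
    obtain ⟨r1, r2, r3, _⟩ := hKsub hp
    have hd0 : 0 < 1 - p.1 - p.2.1 := by linarith
    have hd1 : 1 - p.1 - p.2.1 ≤ 1 := by linarith
    simp only [bAssessor]
    constructor
    · have : p.1 * (betaFn p.2.2.1 γl)⁻¹ * u ^ (p.2.2.1 - 1) * (1-u) ^ (γl - 1) ≤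
          (p.1 * (betaFn p.2.2.1 γl)⁻¹ * u ^ (p.2.2.1 - 1) * (1-u) ^ (γl - 1)
            + p.2.1 * (betaFn γr p.2.2.2)⁻¹ * u ^ (γr - 1) * (1-u) ^ (p.2.2.2 - 1))
            / (1 - p.1 - p.2.1) := by
        rw [le_div_iff₀ hd0]
        nlinarith [mul_le_mul_of_nonneg_left hd1 ht1]
      linarith
    · have : p.2.1 * (betaFn γr p.2.2.2)⁻¹ * u ^ (γr - 1) * (1-u) ^ (p.2.2.2 - 1) ≤
          (p.1 * (betaFn p.2.2.1 γl)⁻¹ * u ^ (p.2.2.1 - 1) * (1-u) ^ (γl - 1)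
            + p.2.1 * (betaFn γr p.2.2.2)⁻¹ * u ^ (γr - 1) * (1-u) ^ (p.2.2.2 - 1))
            / (1 - p.1 - p.2.1) := by
        rw [le_div_iff₀ hd0]
        nlinarith [mul_le_mul_of_nonneg_left hd1 ht2]
      linarith
  have hbge1 : ∀ p ∈ K, ∀ u ∈ Set.Ioo (0:ℝ) 1, 1 ≤ bAssessor γl γr p u := by
    intro p hp u hu
    have h := (hb_lower p hp u hu).1
    have h2 := (hterm p hp u hu).1
    linarith
  -- ####### the enclosing interval constants #######
  set m0 : ℝ := 1 - slo + ε with hm0def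
  have hm0lt1 : m0 < 1 := by simp only [hm0def]; linarith
  have hm00 : 0 < m0 := by simp only [hm0def]; linarith
  set α : ℝ := (slo - ε)/3 with hαdef
  have hα0 : 0 < α := by simp only [hαdef]; linarith
  have hαhalf : α < 1/2 := by simp only [hαdef]; linarith
  have h2α : m0 < 1 - 2*α := by simp only [hm0def, hαdef]; linarith
  set Y : ℝ := 1 + (2 * (Bmin⁻¹ * α ^ (ka - 1))) / τ with hYdef
  have hYbound : ∀ p ∈ K, ∀ u : ℝ, α ≤ u → u ≤ 1 - α → bAssessor γl γr p u ≤ Y := by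
    intro p hp u huα huα'
    obtain ⟨r1, r2, r3, r4, r5, r6, r7⟩ := hKsub hp
    have hu0 : 0 < u := lt_of_lt_of_le hα0 huα
    have hu1 : u < 1 := by linarith
    have huI : u ∈ Set.Ioo (0:ℝ) 1 := ⟨hu0, hu1⟩
    have h1u : α ≤ 1 - u := by linarith
    obtain ⟨hB1, hB2⟩ := hBfacts p hp
    have ht1 : p.1 * (betaFn p.2.2.1 γl)⁻¹ * u ^ (p.2.2.1 - 1) * (1-u) ^ (γl - 1)
        ≤ 1 * Bmin⁻¹ * α ^ (ka - 1) * 1 := by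
      refine prod4_le r1.le (inv_nonneg.mpr hB1.le) (Real.rpow_nonneg hu0.le _)
        (Real.rpow_nonneg (by linarith) _) (by linarith) (inv_anti₀ hBmin0
          (hBminle p hp).1) ?_ (Real.rpow_le_one (by linarith) (by linarith) (by linarith))
      calc u ^ (p.2.2.1 - 1) ≤ α ^ (p.2.2.1 - 1) :=
            Real.rpow_le_rpow_of_nonpos hα0 huα (by linarith)
        _ ≤ α ^ (ka - 1) := Real.rpow_le_rpow_of_exponent_ge hα0 (by linarith)
            (by linarith [(hkale p hp).1])
    have ht2 : p.2.1 * (betaFn γr p.2.2.2)⁻¹ * u ^ (γr - 1) * (1-u) ^ (p.2.2.2 - 1)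
        ≤ 1 * Bmin⁻¹ * 1 * α ^ (ka - 1) := by
      refine prod4_le r2.le (inv_nonneg.mpr hB2.le) (Real.rpow_nonneg hu0.le _)
        (Real.rpow_nonneg (by linarith) _) (by linarith) (inv_anti₀ hBmin0
          (hBminle p hp).2) (Real.rpow_le_one hu0.le hu1.le (by linarith)) ?_
      calc (1-u) ^ (p.2.2.2 - 1) ≤ α ^ (p.2.2.2 - 1) :=
            Real.rpow_le_rpow_of_nonpos hα0 h1u (by linarith)
        _ ≤ α ^ (ka - 1) := Real.rpow_le_rpow_of_exponent_ge hα0 (by linarith)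
            (by linarith [(hkale p hp).2])
    rw [one_mul, mul_one] at ht1
    rw [one_mul, mul_one] at ht2
    obtain ⟨hs1, hs2⟩ := hterm p hp u huI
    have hd0 : 0 < 1 - p.1 - p.2.1 := by linarith
    have hdiv : (p.1 * (betaFn p.2.2.1 γl)⁻¹ * u ^ (p.2.2.1 - 1) * (1-u) ^ (γl - 1)
          + p.2.1 * (betaFn γr p.2.2.2)⁻¹ * u ^ (γr - 1) * (1-u) ^ (p.2.2.2 - 1))
          / (1 - p.1 - p.2.1) ≤ (2 * (Bmin⁻¹ * α ^ (ka - 1))) / τ := by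
      refine div_le_div₀ (mul_nonneg (by norm_num)
        (mul_nonneg (inv_nonneg.mpr hBmin0.le) (Real.rpow_nonneg hα0.le _)))
        (by linarith) hτ0 (hτle p hp)
    simp only [bAssessor, hYdef]
    linarith
  -- ####### endpoint blow-up #######
  set c0 : ℝ := πm * Bmax⁻¹ * min ((2:ℝ)⁻¹ ^ (γl - 1)) ((2:ℝ)⁻¹ ^ (γr - 1)) with hc0def
  have hc00 : 0 < c0 := by
    refine mul_pos (mul_pos hπm0 (inv_pos.mpr hBmax0)) (lt_min ?_ ?_) <;>
      exact Real.rpow_pos_of_pos (by norm_num) _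
  obtain ⟨β, hβ0, hβα, hβpow⟩ : ∃ β : ℝ, 0 < β ∧ β ≤ α ∧ Y + 3 ≤ c0 * β ^ (kb - 1) := by
    have h1 : Filter.Tendsto (fun x : ℝ => (x⁻¹) ^ (1 - kb)) (nhdsWithin 0 (Set.Ioi 0)) atTop :=
      (tendsto_rpow_atTop (by linarith : (0:ℝ) < 1 - kb)).comp tendsto_inv_nhdsGT_zero
    have h2 : Filter.Tendsto (fun x : ℝ => x ^ (kb - 1)) (nhdsWithin 0 (Set.Ioi 0)) atTop := by
      refine h1.congr' ?_
      filter_upwards [self_mem_nhdsWithin] with x hx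
      rw [Real.inv_rpow (le_of_lt hx), ← Real.rpow_neg (le_of_lt hx)]
      congr 1
      ring
    have h3 : Filter.Tendsto (fun x : ℝ => c0 * x ^ (kb - 1)) (nhdsWithin 0 (Set.Ioi 0)) atTop :=
      h2.const_mul_atTop hc00
    have hev1 : ∀ᶠ x in nhdsWithin (0:ℝ) (Set.Ioi 0), Y + 3 ≤ c0 * x ^ (kb - 1) :=
      h3.eventually_ge_atTop (Y + 3)
    have hev2 : Set.Ioc (0:ℝ) α ∈ nhdsWithin (0:ℝ) (Set.Ioi 0) :=
      Ioc_mem_nhdsGT_of_mem ⟨le_refl 0, hα0⟩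
    obtain ⟨x, hx1, hx2⟩ := (hev1.and hev2).exists
    exact ⟨x, hx2.1, hx2.2, hx1⟩
  have hblow : ∀ p ∈ K, ∀ u ∈ Set.Ioo (0:ℝ) 1, u ∉ Set.Icc β (1 - β) →
      Y + 4 ≤ bAssessor γl γr p u := by
    intro p hp u hu hnot
    obtain ⟨r1, r2, r3, r4, r5, r6, r7⟩ := hKsub hp
    obtain ⟨hB1, hB2⟩ := hBfacts p hp
    have hu0 : 0 < u := hu.1
    have hu1 : u < 1 := hu.2
    have hβhalf : β < 1/2 := lt_of_le_of_lt hβα hαhalf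
    have hcases : u < β ∨ 1 - β < u := by
      rcases lt_or_ge u β with hcase | hcase
      · exact Or.inl hcase
      · right
        by_contra hc
        push_neg at hc
        exact hnot ⟨hcase, hc⟩
    rcases hcases with h | h
    · have huh : u ≤ 1/2 := by linarith
      have hlow1 : πm * Bmax⁻¹ * u ^ (kb - 1) * (2:ℝ)⁻¹ ^ (γl - 1)
          ≤ p.1 * (betaFn p.2.2.1 γl)⁻¹ * u ^ (p.2.2.1 - 1) * (1-u) ^ (γl - 1) := by
        refine prod4_le hπm0.le (inv_nonneg.mpr hBmax0.le) (Real.rpow_nonneg hu0.le _)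
          (Real.rpow_nonneg (by norm_num) _) (hπle p hp).1
          (inv_anti₀ hB1 (hBmaxle p hp).1)
          (Real.rpow_le_rpow_of_exponent_ge hu0 hu1.le (by linarith [(hkble p hp).1]))
          (Real.rpow_le_rpow (by norm_num) (by linarith) (by linarith))
      have hc0u : c0 * u ^ (kb - 1) ≤ πm * Bmax⁻¹ * u ^ (kb - 1) * (2:ℝ)⁻¹ ^ (γl - 1) := by
        have hmin := min_le_left ((2:ℝ)⁻¹ ^ (γl - 1)) ((2:ℝ)⁻¹ ^ (γr - 1))
        have hnn : 0 ≤ πm * Bmax⁻¹ * u ^ (kb - 1) :=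
          mul_nonneg (mul_nonneg hπm0.le (inv_nonneg.mpr hBmax0.le))
            (Real.rpow_nonneg hu0.le _)
        calc c0 * u ^ (kb - 1)
            = πm * Bmax⁻¹ * u ^ (kb - 1)
              * min ((2:ℝ)⁻¹ ^ (γl - 1)) ((2:ℝ)⁻¹ ^ (γr - 1)) := by
              rw [hc0def]; ring
          _ ≤ πm * Bmax⁻¹ * u ^ (kb - 1) * (2:ℝ)⁻¹ ^ (γl - 1) :=
              mul_le_mul_of_nonneg_left hmin hnn
      have hββu : c0 * β ^ (kb - 1) ≤ c0 * u ^ (kb - 1) :=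
        mul_le_mul_of_nonneg_left
          (Real.rpow_le_rpow_of_nonpos hu0 h.le (by linarith)) hc00.le
      have := (hb_lower p hp u hu).1
      linarith
    · have huh : 1/2 ≤ u := by linarith
      have hw0 : 0 < 1 - u := by linarith
      have hwβ : 1 - u ≤ β := by linarith
      have hlow2 : πm * Bmax⁻¹ * (2:ℝ)⁻¹ ^ (γr - 1) * (1-u) ^ (kb - 1)
          ≤ p.2.1 * (betaFn γr p.2.2.2)⁻¹ * u ^ (γr - 1) * (1-u) ^ (p.2.2.2 - 1) := by
        refine prod4_le hπm0.le (inv_nonneg.mpr hBmax0.le)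
          (Real.rpow_nonneg (by norm_num) _) (Real.rpow_nonneg hw0.le _) (hπle p hp).2
          (inv_anti₀ hB2 (hBmaxle p hp).2)
          (Real.rpow_le_rpow (by norm_num) (by linarith) (by linarith))
          (Real.rpow_le_rpow_of_exponent_ge hw0 (by linarith) (by linarith [(hkble p hp).2]))
      have hc0u : c0 * (1-u) ^ (kb - 1)
          ≤ πm * Bmax⁻¹ * (2:ℝ)⁻¹ ^ (γr - 1) * (1-u) ^ (kb - 1) := by
        have hmin := min_le_right ((2:ℝ)⁻¹ ^ (γl - 1)) ((2:ℝ)⁻¹ ^ (γr - 1))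
        have hnn : 0 ≤ πm * Bmax⁻¹ * (1-u) ^ (kb - 1) :=
          mul_nonneg (mul_nonneg hπm0.le (inv_nonneg.mpr hBmax0.le))
            (Real.rpow_nonneg hw0.le _)
        calc c0 * (1-u) ^ (kb - 1)
            = πm * Bmax⁻¹ * (1-u) ^ (kb - 1)
              * min ((2:ℝ)⁻¹ ^ (γl - 1)) ((2:ℝ)⁻¹ ^ (γr - 1)) := by
              rw [hc0def]; ring
          _ ≤ πm * Bmax⁻¹ * (1-u) ^ (kb - 1) * (2:ℝ)⁻¹ ^ (γr - 1) :=
              mul_le_mul_of_nonneg_left hmin hnn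
          _ = πm * Bmax⁻¹ * (2:ℝ)⁻¹ ^ (γr - 1) * (1-u) ^ (kb - 1) := by ring
      have hββu : c0 * β ^ (kb - 1) ≤ c0 * (1-u) ^ (kb - 1) :=
        mul_le_mul_of_nonneg_left
          (Real.rpow_le_rpow_of_nonpos hw0 hwβ (by linarith)) hc00.le
      have := (hb_lower p hp u hu).2
      linarith
  -- ####### Claim A : levels of small sublevel sets are bounded #######
  have hclaimA : ∀ p ∈ K, ∀ y m : ℝ, 0 < m → m ≤ m0 →
      MeasureTheory.volume {u : ℝ | u ∈ Set.Ioo (0:ℝ) 1 ∧ bAssessor γl γr p u < y}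
        = ENNReal.ofReal m → y ≤ Y + 1 := by
    intro p hp y m hm hmm0 hvol
    by_contra hY
    push_neg at hY
    have hsub : Set.Ioo α (1-α) ⊆
        {u : ℝ | u ∈ Set.Ioo (0:ℝ) 1 ∧ bAssessor γl γr p u < y} := by
      intro u hu
      refine ⟨⟨lt_trans hα0 hu.1, lt_of_lt_of_le hu.2 (by linarith : 1 - α ≤ 1)⟩, ?_⟩
      exact lt_of_le_of_lt (hYbound p hp u hu.1.le hu.2.le) (by linarith : Y < y)
    have hmes : MeasureTheory.volume (Set.Ioo α (1-α)) ≤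
        MeasureTheory.volume {u : ℝ | u ∈ Set.Ioo (0:ℝ) 1 ∧ bAssessor γl γr p u < y} :=
      measure_mono hsub
    rw [hvol, Real.volume_Ioo] at hmes
    rw [ENNReal.ofReal_le_ofReal_iff hm.le] at hmes
    linarith
  -- ####### continuity of the measure of sublevel sets #######
  set C : Set ((ℝ × ℝ × ℝ × ℝ) × ℝ) := K ×ˢ Set.Icc 0 (Y+3) with hCdef
  have hCcomp : IsCompact C := hK.prod isCompact_Icc
  have hPhiCont : ContinuousOn (fun q : (ℝ × ℝ × ℝ × ℝ) × ℝ =>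
      (MeasureTheory.volume {u : ℝ | u ∈ Set.Ioo (0:ℝ) 1 ∧ bAssessor γl γr q.1 u < q.2}).toReal)
      C := by
    rintro ⟨p₀, y₀⟩ hq₀
    have hp₀K : p₀ ∈ K := hq₀.1
    have hp₀ : p₀ ∈ paramRegion := hKsub hp₀K
    have hy₀ : y₀ ∈ Set.Icc (0:ℝ) (Y+3) := hq₀.2
    set F : ((ℝ × ℝ × ℝ × ℝ) × ℝ) → ℝ → ℝ := fun q u =>
      Set.indicator {v : ℝ | v ∈ Set.Ioo (0:ℝ) 1 ∧ bAssessor γl γr q.1 v < q.2}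
        (fun _ => (1:ℝ)) u with hFdef
    have hβlt : β < 1 - β := by
      have : β < 1/2 := lt_of_le_of_lt hβα hαhalf
      linarith
    have hnull : MeasureTheory.volume
        {u : ℝ | u ∈ Set.Ioo (0:ℝ) 1 ∧ bAssessor γl γr p₀ u = y₀} = 0 :=
      level_set_null γl γr p₀ hβ0 hβlt (hblow p₀ hp₀K) (by linarith [hy₀.2])
    have hqEq : ∀ q : (ℝ × ℝ × ℝ × ℝ) × ℝ, q ∈ C →
        (MeasureTheory.volume
          {u : ℝ | u ∈ Set.Ioo (0:ℝ) 1 ∧ bAssessor γl γr q.1 u < q.2}).toReal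
          = ∫ u, F q u := by
      intro q hq
      rw [hFdef]
      rw [MeasureTheory.integral_indicator_const (1:ℝ)
        (measurableSet_sublevel γl γr hγl0 hγr0 (hKsub hq.1) q.2)]
      rw [smul_eq_mul, mul_one]
      rfl
    have hmain : Filter.Tendsto (fun q => ∫ u, F q u) (nhdsWithin (p₀, y₀) C)
        (nhds (∫ u, F (p₀, y₀) u)) := by
      refine MeasureTheory.tendsto_integral_filter_of_dominated_convergence
        (Set.indicator (Set.Ioo (0:ℝ) 1) (fun _ => (1:ℝ))) ?_ ?_ ?_ ?_
      · filter_upwards [self_mem_nhdsWithin] with q hqC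
        exact ((measurable_const.indicator
          (measurableSet_sublevel γl γr hγl0 hγr0 (hKsub hqC.1) q.2))).aestronglyMeasurable
      · refine Filter.Eventually.of_forall (fun q => MeasureTheory.ae_of_all _ (fun u => ?_))
        by_cases hu : u ∈ {v : ℝ | v ∈ Set.Ioo (0:ℝ) 1 ∧ bAssessor γl γr q.1 v < q.2}
        · simp only [hFdef]
          rw [Set.indicator_of_mem hu, Set.indicator_of_mem hu.1]
          simp
        · simp only [hFdef]
          rw [Set.indicator_of_notMem hu]
          simpa using Set.indicator_nonneg (fun _ _ => (zero_le_one : (0:ℝ) ≤ 1)) u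
      · rw [MeasureTheory.integrable_indicator_iff measurableSet_Ioo]
        exact MeasureTheory.integrableOn_const (by simp [Real.volume_Ioo])
      · have htend : ∀ u : ℝ,
            u ∉ {v : ℝ | v ∈ Set.Ioo (0:ℝ) 1 ∧ bAssessor γl γr p₀ v = y₀} →
            Filter.Tendsto (fun q => F q u) (nhdsWithin (p₀, y₀) C) (nhds (F (p₀, y₀) u)) := by
          intro u huN
          by_cases huI : u ∈ Set.Ioo (0:ℝ) 1
          · have hne : bAssessor γl γr p₀ u ≠ y₀ := fun hc => huN ⟨huI, hc⟩
            have hbp : ContinuousAt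
                (fun q : (ℝ × ℝ × ℝ × ℝ) × ℝ => bAssessor γl γr q.1 u) (p₀, y₀) :=
              ContinuousAt.comp (g := fun p' => bAssessor γl γr p' u)
                (f := fun q : (ℝ × ℝ × ℝ × ℝ) × ℝ => q.1) (x := ((p₀, y₀)))
                (bA_contAt_param γl γr hγl0 hγr0 hp₀ huI.1 huI.2)
                (continuous_fst.continuousAt)
            have hcont : ContinuousAt
                (fun q : (ℝ × ℝ × ℝ × ℝ) × ℝ => q.2 - bAssessor γl γr q.1 u) (p₀, y₀) :=
              (continuous_snd.continuousAt).sub hbp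
            rcases lt_or_gt_of_ne hne with hlt | hgt
            · have hpos : (0:ℝ) < y₀ - bAssessor γl γr p₀ u := by linarith
              have hevq : {q : (ℝ × ℝ × ℝ × ℝ) × ℝ |
                  0 < q.2 - bAssessor γl γr q.1 u} ∈ nhds ((p₀, y₀)) :=
                hcont (Ioi_mem_nhds hpos)
              refine Filter.Tendsto.congr' ?_ tendsto_const_nhds
              filter_upwards [nhdsWithin_le_nhds hevq] with q hq
              have hmem1 : u ∈ {v : ℝ | v ∈ Set.Ioo (0:ℝ) 1 ∧ bAssessor γl γr p₀ v < y₀} :=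
                ⟨huI, hlt⟩
              have hq' : (0:ℝ) < q.2 - bAssessor γl γr q.1 u := hq
              have hmem2 : u ∈ {v : ℝ | v ∈ Set.Ioo (0:ℝ) 1 ∧ bAssessor γl γr q.1 v < q.2} :=
                ⟨huI, by linarith⟩
              simp only [hFdef]
              rw [Set.indicator_of_mem hmem1, Set.indicator_of_mem hmem2]
            · have hpos : (0:ℝ) < bAssessor γl γr p₀ u - y₀ := by linarith
              have hcont' : ContinuousAt
                  (fun q : (ℝ × ℝ × ℝ × ℝ) × ℝ => bAssessor γl γr q.1 u - q.2) (p₀, y₀) :=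
                hbp.sub (continuous_snd.continuousAt)
              have hevq : {q : (ℝ × ℝ × ℝ × ℝ) × ℝ |
                  0 < bAssessor γl γr q.1 u - q.2} ∈ nhds ((p₀, y₀)) :=
                hcont' (Ioi_mem_nhds hpos)
              refine Filter.Tendsto.congr' ?_ tendsto_const_nhds
              filter_upwards [nhdsWithin_le_nhds hevq] with q hq
              have hq' : (0:ℝ) < bAssessor γl γr q.1 u - q.2 := hq
              have hn1 : u ∉ {v : ℝ | v ∈ Set.Ioo (0:ℝ) 1 ∧ bAssessor γl γr p₀ v < y₀} := by
                intro hc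
                exact absurd hc.2 (not_lt.mpr (by linarith))
              have hn2 : u ∉ {v : ℝ | v ∈ Set.Ioo (0:ℝ) 1 ∧ bAssessor γl γr q.1 v < q.2} := by
                intro hc
                exact absurd hc.2 (not_lt.mpr (by linarith))
              simp only [hFdef]
              rw [Set.indicator_of_notMem hn1, Set.indicator_of_notMem hn2]
          · have hz : ∀ q : (ℝ × ℝ × ℝ × ℝ) × ℝ, F q u = 0 := fun q =>
              Set.indicator_of_notMem (fun hc => huI hc.1) _
            have h0 : (fun q : (ℝ × ℝ × ℝ × ℝ) × ℝ => F q u) = fun _ => (0:ℝ) :=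
              funext fun q => hz q
            rw [h0, hz (p₀, y₀)]
            exact tendsto_const_nhds
        refine MeasureTheory.ae_iff.mpr (measure_mono_null ?_ hnull)
        intro u hu
        by_contra hN
        exact hu (htend u hN)
    have hfinal := Filter.Tendsto.congr'
      (Filter.EventuallyEq.symm (by
        filter_upwards [self_mem_nhdsWithin] with q hq
        exact hqEq q hq)) hmain
    rw [← hqEq (p₀, y₀) hq₀] at hfinal
    exact hfinal
  have hPhiUC := hCcomp.uniformContinuousOn_of_continuous hPhiCont
  obtain ⟨δ₂, hδ₂0, hδ₂⟩ := Metric.uniformContinuousOn_iff.mp hPhiUC ε hε0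
  set η : ℝ := min 1 (δ₂/3) with hηdef
  have hη0 : 0 < η := lt_min one_pos (by linarith)
  have hη1 : η ≤ 1 := min_le_left _ _
  have hηδ : 2*η < δ₂ := by
    have := min_le_right 1 (δ₂/3)
    have h3 : η ≤ δ₂/3 := this
    linarith
  -- ####### uniform continuity of the assessor #######
  set D : Set ((ℝ × ℝ × ℝ × ℝ) × ℝ) := K ×ˢ Set.Icc β (1-β) with hDdef
  have hDcomp : IsCompact D := hK.prod isCompact_Icc
  have hGcont : ContinuousOn (fun q : (ℝ × ℝ × ℝ × ℝ) × ℝ => bAssessor γl γr q.1 q.2) D := by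
    rintro ⟨p, u⟩ hq
    have hβhalf : β < 1/2 := lt_of_le_of_lt hβα hαhalf
    exact (bA_contAt γl γr hγl0 hγr0 (hKsub hq.1) (lt_of_lt_of_le hβ0 hq.2.1)
      (lt_of_le_of_lt hq.2.2 (by linarith : 1 - β < 1))).continuousWithinAt
  have hGUC := hDcomp.uniformContinuousOn_of_continuous hGcont
  obtain ⟨δ₁, hδ₁0, hδ₁⟩ := Metric.uniformContinuousOn_iff.mp hGUC η hη0
  -- ####### the key inclusion step #######
  have key : ∀ P1 ∈ K, ∀ P2 ∈ K, ∀ y1 y2 m1 m2 : ℝ, 0 < m1 → m2 ≤ m0 → m1 + ε ≤ m2 →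
      (∀ u ∈ Set.Icc β (1-β), |bAssessor γl γr P1 u - bAssessor γl γr P2 u| < η) →
      MeasureTheory.volume {u : ℝ | u ∈ Set.Ioo (0:ℝ) 1 ∧ bAssessor γl γr P1 u < y1}
        = ENNReal.ofReal m1 →
      MeasureTheory.volume {u : ℝ | u ∈ Set.Ioo (0:ℝ) 1 ∧ bAssessor γl γr P2 u < y2}
        = ENNReal.ofReal m2 →
      {u : ℝ | u ∈ Set.Ioo (0:ℝ) 1 ∧ bAssessor γl γr P1 u < y1} ⊆
        {u : ℝ | u ∈ Set.Ioo (0:ℝ) 1 ∧ bAssessor γl γr P2 u < y2} := by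
    intro P1 h1K P2 h2K y1 y2 m1 m2 hm1 hm2m0 hm12 hclose hv1 hv2
    have hm1m0 : m1 ≤ m0 := by linarith
    have hy1 : y1 ≤ Y + 1 := hclaimA P1 h1K y1 m1 hm1 hm1m0 hv1
    have hy1nn : 0 ≤ y1 := by
      by_contra hneg
      push_neg at hneg
      have hempty : {u : ℝ | u ∈ Set.Ioo (0:ℝ) 1 ∧ bAssessor γl γr P1 u < y1} = ∅ := by
        ext u
        simp only [Set.mem_setOf_eq, Set.mem_empty_iff_false, iff_false, not_and]
        intro huI hlt
        have := hbge1 P1 h1K u huI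
        linarith
      rw [hempty] at hv1
      simp only [measure_empty] at hv1
      have := ENNReal.ofReal_eq_zero.mp hv1.symm
      linarith
    have hstep1 : ∀ u : ℝ, u ∈ Set.Ioo (0:ℝ) 1 → bAssessor γl γr P1 u < y1 →
        u ∈ Set.Icc β (1-β) ∧ bAssessor γl γr P2 u < y1 + η := by
      intro u hu hlt
      have hIcc : u ∈ Set.Icc β (1-β) := by
        by_contra hnot
        have := hblow P1 h1K u hu hnot
        linarith
      have habs := abs_lt.mp (hclose u hIcc)
      exact ⟨hIcc, by linarith [habs.1]⟩
    have hstep2 : ∀ u : ℝ, u ∈ Set.Ioo (0:ℝ) 1 → bAssessor γl γr P2 u < y1 + η →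
        bAssessor γl γr P1 u < y1 + 2*η := by
      intro u hu hlt
      have hIcc : u ∈ Set.Icc β (1-β) := by
        by_contra hnot
        have := hblow P2 h2K u hu hnot
        linarith
      have habs := abs_lt.mp (hclose u hIcc)
      linarith [habs.2]
    -- measure of the enlarged sublevel set of P1
    have hq1C : ((P1, y1) : (ℝ × ℝ × ℝ × ℝ) × ℝ) ∈ C :=
      ⟨h1K, ⟨hy1nn, show y1 ≤ Y + 3 by linarith⟩⟩
    have hq2C : ((P1, y1 + 2*η) : (ℝ × ℝ × ℝ × ℝ) × ℝ) ∈ C :=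
      ⟨h1K, ⟨show (0:ℝ) ≤ y1 + 2*η by linarith, show y1 + 2*η ≤ Y + 3 by linarith⟩⟩
    have hdist12 : dist ((P1, y1) : (ℝ × ℝ × ℝ × ℝ) × ℝ) ((P1, y1 + 2*η)) < δ₂ := by
      rw [Prod.dist_eq]
      refine lt_of_le_of_lt (max_le ?_ ?_) hηδ
      · rw [dist_self]; linarith
      · rw [Real.dist_eq, show y1 - (y1 + 2*η) = -(2*η) by ring, abs_neg,
          abs_of_nonneg (by linarith : (0:ℝ) ≤ 2*η)]
    have hPdiff := hδ₂ _ hq1C _ hq2C hdist12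
    simp only [Real.dist_eq] at hPdiff
    have hPhi1 : (MeasureTheory.volume
        {u : ℝ | u ∈ Set.Ioo (0:ℝ) 1 ∧ bAssessor γl γr P1 u < y1}).toReal = m1 := by
      rw [hv1, ENNReal.toReal_ofReal hm1.le]
    have habs2 := abs_lt.mp hPdiff
    have hPhilt : (MeasureTheory.volume
        {u : ℝ | u ∈ Set.Ioo (0:ℝ) 1 ∧ bAssessor γl γr P1 u < y1 + 2*η}).toReal < m2 := by
      have h1 := habs2.1
      have h2 := habs2.2
      rw [hPhi1] at h1 h2
      linarith
    have hTfin : MeasureTheory.volume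
        {u : ℝ | u ∈ Set.Ioo (0:ℝ) 1 ∧ bAssessor γl γr P1 u < y1 + 2*η} ≠ ⊤ := by
      refine ne_top_of_le_ne_top (by simp [Real.volume_Ioo] :
        MeasureTheory.volume (Set.Ioo (0:ℝ) 1) ≠ ⊤) (measure_mono ?_)
      exact fun u hu => hu.1
    have hvolT : MeasureTheory.volume
        {u : ℝ | u ∈ Set.Ioo (0:ℝ) 1 ∧ bAssessor γl γr P1 u < y1 + 2*η}
        < ENNReal.ofReal m2 := by
      rw [← ENNReal.ofReal_toReal hTfin]
      exact (ENNReal.ofReal_lt_ofReal_iff (by linarith : (0:ℝ) < m2)).mpr hPhilt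
    rcases le_or_gt (y1 + η) y2 with hcase | hcase
    · intro u hu
      obtain ⟨hIcc, hb2⟩ := hstep1 u hu.1 hu.2
      exact ⟨hu.1, lt_of_lt_of_le hb2 hcase⟩
    · exfalso
      have hsub2 : {u : ℝ | u ∈ Set.Ioo (0:ℝ) 1 ∧ bAssessor γl γr P2 u < y2} ⊆
          {u : ℝ | u ∈ Set.Ioo (0:ℝ) 1 ∧ bAssessor γl γr P1 u < y1 + 2*η} := by
        intro u hu
        exact ⟨hu.1, hstep2 u hu.1 (lt_trans hu.2 hcase)⟩
      have hmes : MeasureTheory.volume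
          {u : ℝ | u ∈ Set.Ioo (0:ℝ) 1 ∧ bAssessor γl γr P2 u < y2} ≤
          MeasureTheory.volume
          {u : ℝ | u ∈ Set.Ioo (0:ℝ) 1 ∧ bAssessor γl γr P1 u < y1 + 2*η} :=
        measure_mono hsub2
      rw [hv2] at hmes
      exact absurd (lt_of_le_of_lt hmes hvolT) (lt_irrefl _)
  -- ####### conclusion #######
  refine ⟨δ₁, hδ₁0, ?_⟩
  intro p hpK pstar hpsK hdist s hs
  have hbclose : ∀ u ∈ Set.Icc β (1-β),
      |bAssessor γl γr p u - bAssessor γl γr pstar u| < η := by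
    intro u hu
    have h1 : ((p, u) : (ℝ × ℝ × ℝ × ℝ) × ℝ) ∈ D := ⟨hpK, hu⟩
    have h2 : ((pstar, u) : (ℝ × ℝ × ℝ × ℝ) × ℝ) ∈ D := ⟨hpsK, hu⟩
    have hd : dist ((p, u) : (ℝ × ℝ × ℝ × ℝ) × ℝ) ((pstar, u)) < δ₁ := by
      rw [Prod.dist_eq]
      refine lt_of_le_of_lt (max_le (le_of_eq rfl) ?_) ?_
      · rw [dist_self]; exact dist_nonneg
      · rw [dist_eq_norm]; exact hdist
    have := hδ₁ _ h1 _ h2 hd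
    simpa [Real.dist_eq] using this
  obtain ⟨hsloS, hs1⟩ := hs
  have hm : 1 - s ∈ Set.Ioo (0:ℝ) 1 := ⟨by linarith, by linarith⟩
  have hm' : 1 - s + ε ∈ Set.Ioo (0:ℝ) 1 := ⟨by linarith, by linarith⟩
  obtain ⟨⟨y, hy⟩, hvol⟩ := hJ p hpK (1-s) hm
  obtain ⟨⟨y', hy'⟩, hvol'⟩ := hJ pstar hpsK (1-s+ε) hm'
  constructor
  · rw [hy, hy']
    exact key p hpK pstar hpsK y y' (1-s) (1-s+ε) (by linarith)
      (by simp only [hm0def]; linarith) (by linarith) hbclose (hy ▸ hvol) (hy' ▸ hvol')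
  · intro hsε
    have hm'' : 1 - s - ε ∈ Set.Ioo (0:ℝ) 1 := ⟨by linarith, by linarith⟩
    obtain ⟨⟨y'', hy''⟩, hvol''⟩ := hJ pstar hpsK (1-s-ε) hm''
    rw [hy, hy'']
    exact key pstar hpsK p hpK y'' y (1-s-ε) (1-s) (by linarith)
      (by simp only [hm0def]; linarith) (by linarith)
      (fun u hu => by rw [abs_sub_comm]; exact hbclose u hu) (hy'' ▸ hvol'') (hy ▸ hvol)
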